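/- arXiv:2005.13214 — 5 statements merged into one kernel-verified Lean document; each statement's English description precedes it below -/
import Mathlib

section
/- Let γ > 1, ε > 0, and let Θ_ε denote the primitive vanishing at 0 of s ↦ √(p_ε'(s))/s on (0,1), where p_ε(s) = ε(s/(1-s))^γ. There exists a constant C > 0 depending only on γ (not on ε) such that for all ρ ∈ [1/2, 1): Θ_ε(ρ) ≥ C √ε / (1-ρ)^{(γ-1)/2}. In particular, if Θ_ε(ρ) ≤ M then ρ ≤ 1 - c ε^{1/(γ-1)} for some c > 0 depending only on γ and M. -/
open Real Set MeasureTheory intervalIntegral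

lemma Theta_exact (γ : ℝ) (hγ : 1 < γ) (ε : ℝ) (hε : 0 < ε) (ρ : ℝ)
    (hρ0 : 0 ≤ ρ) (hρ1 : ρ < 1) :
    ∫ s in (0:ℝ)..ρ, Real.sqrt (ε * γ * s ^ (γ - 1) * (1 - s) ^ (-(γ + 1))) / s
      = Real.sqrt (ε * γ) / ((γ - 1) / 2) * (ρ / (1 - ρ)) ^ ((γ - 1) / 2) := by
  set α : ℝ := (γ - 1) / 2 with hα_def
  have hα : 0 < α := by simp only [hα_def]; linarith
  have hεγ : 0 ≤ ε * γ := by positivity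
  -- the clean derivative
  set f' : ℝ → ℝ := fun s => α * s ^ (α - 1) * (1 - s) ^ (-(α + 1)) with hf'_def
  set F : ℝ → ℝ := fun s => (s / (1 - s)) ^ α with hF_def
  -- pointwise identity on Ioc 0 ρ
  have hpt : ∀ s ∈ Ioc (0:ℝ) ρ,
      Real.sqrt (ε * γ * s ^ (γ - 1) * (1 - s) ^ (-(γ + 1))) / s
        = (Real.sqrt (ε * γ) / α) * f' s := by
    intro s hs
    have hs0 : 0 < s := hs.1
    have hs1 : 0 < 1 - s := by have := hs.2; linarith
    have h1 : Real.sqrt (s ^ (γ - 1)) = s ^ α := by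
      rw [Real.sqrt_eq_rpow, ← Real.rpow_mul hs0.le, mul_one_div, hα_def]
    have h2 : Real.sqrt ((1 - s) ^ (-(γ + 1))) = (1 - s) ^ (-(α + 1)) := by
      rw [Real.sqrt_eq_rpow, ← Real.rpow_mul hs1.le, mul_one_div]
      congr 1
      rw [hα_def]; ring
    rw [Real.sqrt_mul (by positivity), Real.sqrt_mul hεγ, h1, h2]
    have h3 : s ^ α / s = s ^ (α - 1) := by
      rw [Real.rpow_sub hs0, Real.rpow_one]
    have h4 : Real.sqrt (ε * γ) / α * f' s
        = Real.sqrt (ε * γ) * s ^ (α - 1) * (1 - s) ^ (-(α + 1)) := by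
      simp only [hf'_def]
      field_simp
    rw [h4, ← h3]
    ring
  -- FTC for f'
  have hint : IntervalIntegrable f' volume 0 ρ := by
    have h1 : IntervalIntegrable (fun s : ℝ => s ^ (α - 1)) volume 0 ρ :=
      intervalIntegral.intervalIntegrable_rpow' (by linarith)
    have h2 : ContinuousOn (fun s : ℝ => (1 - s) ^ (-(α + 1))) (Set.uIcc (0:ℝ) ρ) := by
      apply ContinuousOn.rpow_const
      · exact (continuousOn_const.sub continuousOn_id)
      · intro x hx
        left
        rw [Set.uIcc_of_le hρ0] at hx
        have : x ≤ ρ := hx.2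
        intro h; nlinarith [hx.1]
    simpa [hf'_def, mul_assoc] using (h1.mul_continuousOn h2).const_mul α
  have hderiv : ∀ s ∈ Ioo (0:ℝ) ρ, HasDerivAt F (f' s) s := by
    intro s hs
    have hs0 : 0 < s := hs.1
    have hs1 : 0 < 1 - s := by have := hs.2; linarith
    have hd1 : HasDerivAt (fun s : ℝ => s / (1 - s)) (1 / (1 - s) ^ 2) s := by
      have := (hasDerivAt_id s).div ((hasDerivAt_id s).const_sub 1) hs1.ne'
      refine this.congr_deriv ?_
      simp only [id]
      ring
    have hx : 0 < s / (1 - s) := div_pos hs0 hs1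
    have hd2 : HasDerivAt (fun y : ℝ => y ^ α) (α * (s / (1 - s)) ^ (α - 1)) (s / (1 - s)) :=
      Real.hasDerivAt_rpow_const (Or.inl hx.ne')
    have := hd2.comp s hd1
    refine this.congr_deriv ?_
    symm
    show α * s ^ (α - 1) * (1 - s) ^ (-(α + 1)) = _
    have e1 : (1 - s) ^ (-(α + 1)) = ((1 - s) ^ (α - 1) * (1 - s) ^ 2)⁻¹ := by
      rw [← Real.rpow_two, ← Real.rpow_add hs1, Real.rpow_neg hs1.le,
        show α - 1 + 2 = α + 1 by ring]
    have p1 : (0:ℝ) < (1 - s) ^ (α - 1) := Real.rpow_pos_of_pos hs1 _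
    rw [Real.div_rpow hs0.le hs1.le, e1]
    field_simp
  have hcont : ContinuousOn F (Icc (0:ℝ) ρ) := by
    apply ContinuousOn.rpow_const
    · exact (continuousOn_id.div (continuousOn_const.sub continuousOn_id)
        (fun x hx => by have : x ≤ ρ := hx.2; intro h; nlinarith [hx.1]))
    · exact fun x _ => Or.inr hα.le
  have hFTC : ∫ s in (0:ℝ)..ρ, f' s = (ρ / (1 - ρ)) ^ α := by
    rw [intervalIntegral.integral_eq_sub_of_hasDeriv_right_of_le hρ0 hcont
      (fun s hs => (hderiv s hs).hasDerivWithinAt) hint]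
    simp [hF_def, Real.zero_rpow hα.ne']
  calc ∫ s in (0:ℝ)..ρ, Real.sqrt (ε * γ * s ^ (γ - 1) * (1 - s) ^ (-(γ + 1))) / s
      = ∫ s in (0:ℝ)..ρ, (Real.sqrt (ε * γ) / α) * f' s := by
        rw [intervalIntegral.integral_of_le hρ0, intervalIntegral.integral_of_le hρ0]
        exact MeasureTheory.setIntegral_congr_fun measurableSet_Ioc hpt
    _ = (Real.sqrt (ε * γ) / α) * ∫ s in (0:ℝ)..ρ, f' s := by
        rw [intervalIntegral.integral_const_mul]
    _ = Real.sqrt (ε * γ) / ((γ - 1) / 2) * (ρ / (1 - ρ)) ^ ((γ - 1) / 2) := by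
        rw [hFTC]

theorem Theta_lower_bound_near_congestion (γ : ℝ) (hγ : 1 < γ) :
    (∃ C > 0, ∀ ε > (0:ℝ), ∀ ρ ∈ Set.Ico (1/2 : ℝ) 1,
      C * Real.sqrt ε / (1 - ρ) ^ ((γ - 1) / 2) ≤
        ∫ s in (0:ℝ)..ρ, Real.sqrt (ε * γ * s ^ (γ - 1) * (1 - s) ^ (-(γ + 1))) / s) ∧
    ∀ M > (0:ℝ), ∃ c > 0, ∀ ε > (0:ℝ), ∀ ρ ∈ Set.Ico (1/2 : ℝ) 1,
      (∫ s in (0:ℝ)..ρ, Real.sqrt (ε * γ * s ^ (γ - 1) * (1 - s) ^ (-(γ + 1))) / s) ≤ M →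
      ρ ≤ 1 - c * ε ^ (1 / (γ - 1)) := by
  set α : ℝ := (γ - 1) / 2 with hα_def
  have hα : 0 < α := by simp only [hα_def]; linarith
  have hγ0 : 0 < γ := by linarith
  set C : ℝ := Real.sqrt γ / α * (1/2 : ℝ) ^ α with hC_def
  have hC : 0 < C := by
    have : (0:ℝ) < Real.sqrt γ := Real.sqrt_pos.mpr hγ0
    have : (0:ℝ) < (1/2 : ℝ) ^ α := Real.rpow_pos_of_pos (by norm_num) _
    positivity
  have main : ∀ ε > (0:ℝ), ∀ ρ ∈ Set.Ico (1/2 : ℝ) 1,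
      C * Real.sqrt ε / (1 - ρ) ^ ((γ - 1) / 2) ≤
        ∫ s in (0:ℝ)..ρ, Real.sqrt (ε * γ * s ^ (γ - 1) * (1 - s) ^ (-(γ + 1))) / s := by
    intro ε hε ρ hρ
    have hρ0 : (0:ℝ) ≤ ρ := le_trans (by norm_num) hρ.1
    have hρ1 : ρ < 1 := hρ.2
    have h1ρ : (0:ℝ) < 1 - ρ := by linarith
    rw [Theta_exact γ hγ ε hε ρ hρ0 hρ1]
    rw [Real.sqrt_mul hε.le, Real.div_rpow hρ0 h1ρ.le]
    have e1 : C * Real.sqrt ε / (1 - ρ) ^ α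
        = Real.sqrt ε * Real.sqrt γ / α * ((1/2 : ℝ) ^ α / (1 - ρ) ^ α) := by
      rw [hC_def]; ring
    rw [e1]
    have hbase : ((1:ℝ)/2) ^ α ≤ ρ ^ α := Real.rpow_le_rpow (by norm_num) hρ.1 hα.le
    have hXnn : (0:ℝ) ≤ Real.sqrt ε * Real.sqrt γ / α := by positivity
    have h1ρα : (0:ℝ) < (1 - ρ) ^ α := Real.rpow_pos_of_pos h1ρ _
    exact mul_le_mul_of_nonneg_left (by gcongr) hXnn
  refine ⟨⟨C, hC, main⟩, ?_⟩
  intro M hM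
  refine ⟨(C / M) ^ (1/α : ℝ), Real.rpow_pos_of_pos (div_pos hC hM) _, ?_⟩
  intro ε hε ρ hρ hΘ
  have hρ0 : (0:ℝ) ≤ ρ := le_trans (by norm_num) hρ.1
  have h1ρ : (0:ℝ) < 1 - ρ := by linarith [hρ.2]
  have h1ρα : (0:ℝ) < (1 - ρ) ^ α := Real.rpow_pos_of_pos h1ρ _
  have h1 : C * Real.sqrt ε / (1 - ρ) ^ α ≤ M := le_trans (main ε hε ρ hρ) hΘ
  have h2 : C * Real.sqrt ε / M ≤ (1 - ρ) ^ α := by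
    rw [div_le_iff₀ h1ρα] at h1
    rw [div_le_iff₀ hM]
    linarith [h1]
  have h3 : (C * Real.sqrt ε / M) ^ (1/α : ℝ) ≤ 1 - ρ := by
    have := Real.rpow_le_rpow (by positivity) h2 (by positivity : (0:ℝ) ≤ 1/α)
    rwa [← Real.rpow_mul h1ρ.le, mul_one_div_cancel hα.ne', Real.rpow_one] at this
  have h4 : (C * Real.sqrt ε / M) ^ (1/α : ℝ)
      = (C / M) ^ (1/α : ℝ) * ε ^ (1 / (γ - 1)) := by
    have e2 : C * Real.sqrt ε / M = (C / M) * ε ^ ((1:ℝ)/2) := by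
      rw [Real.sqrt_eq_rpow]; ring
    have hexp : (1:ℝ)/2 * (1/α) = 1 / (γ - 1) := by
      rw [hα_def]
      have : γ - 1 ≠ 0 := by linarith
      field_simp
    rw [e2, Real.mul_rpow (div_pos hC hM).le (Real.rpow_nonneg hε.le _),
      ← Real.rpow_mul hε.le, hexp]
  rw [h4] at h3
  linarith
end

section
/- Let γ ∈ (1,3), ε ∈ (0,1), α ∈ [1/(γ+1), 1/(γ-1)], and suppose v > 1 satisfies c₁ ε^α ≤ v - 1 ≤ c₂ ε^α for constants 0 < c₁ ≤ c₂. Define a_ε(v) = p''(v) / (2(-p'(v))^{5/4}) with p(v) = ε(v-1)^{-γ}. Then there are constants K₁, K₂ > 0 depending only on γ, c₁, c₂ such that K₁ ε^{-1/(γ+1)} ≤ a_ε(v) ≤ K₂ ε^{-1/(2(γ-1))}. -/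
open Real Set

theorem riccati_coefficient_bounds (γ c₁ c₂ : ℝ)
    (hγ1 : 1 < γ) (hγ3 : γ < 3) (hc₁ : 0 < c₁) (hc₁₂ : c₁ ≤ c₂) :
    ∃ K₁ > (0:ℝ), ∃ K₂ > (0:ℝ), ∀ ε α v : ℝ,
      0 < ε → ε < 1 →
      1 / (γ + 1) ≤ α → α ≤ 1 / (γ - 1) →
      1 < v → c₁ * ε ^ α ≤ v - 1 → v - 1 ≤ c₂ * ε ^ α →
      K₁ * ε ^ (-1 / (γ + 1)) ≤
        ε * γ * (γ + 1) * (v - 1) ^ (-(γ + 2)) /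
          (2 * (ε * γ * (v - 1) ^ (-(γ + 1))) ^ ((5:ℝ)/4)) ∧
      ε * γ * (γ + 1) * (v - 1) ^ (-(γ + 2)) /
          (2 * (ε * γ * (v - 1) ^ (-(γ + 1))) ^ ((5:ℝ)/4)) ≤
        K₂ * ε ^ (-1 / (2 * (γ - 1))) := by
  have hγ0 : (0:ℝ) < γ := by linarith
  have hc₂ : (0:ℝ) < c₂ := lt_of_lt_of_le hc₁ hc₁₂
  set C : ℝ := (γ + 1) * γ ^ (-(1:ℝ)/4) / 2 with hCdef
  have hCpos : 0 < C := by positivity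
  refine ⟨C * c₂ ^ ((γ-3)/4), by positivity, C * c₁ ^ ((γ-3)/4), by positivity, ?_⟩
  intro ε α v hε hε1 hα1 hα2 hv h1 h2
  have hu : 0 < v - 1 := by linarith
  have hεα : 0 < ε ^ α := Real.rpow_pos_of_pos hε α
  have hp : (γ - 3)/4 ≤ 0 := by linarith
  -- the key closed form
  have hden : (ε * γ * (v-1) ^ (-(γ+1))) ^ ((5:ℝ)/4)
      = ε ^ ((5:ℝ)/4) * γ ^ ((5:ℝ)/4) * (v-1) ^ (-(γ+1) * ((5:ℝ)/4)) := by
    rw [Real.mul_rpow (by positivity) (by positivity),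
      Real.mul_rpow hε.le hγ0.le, ← Real.rpow_mul hu.le]
  have eε : ε ^ (-(1:ℝ)/4) * ε ^ ((5:ℝ)/4) = ε := by
    rw [← Real.rpow_add hε]; norm_num
  have eγ : γ ^ (-(1:ℝ)/4) * γ ^ ((5:ℝ)/4) = γ := by
    rw [← Real.rpow_add hγ0]; norm_num
  have eu : (v-1) ^ ((γ-3)/4) * (v-1) ^ (-(γ+1) * ((5:ℝ)/4)) = (v-1) ^ (-(γ+2)) := by
    rw [← Real.rpow_add hu]; congr 1; ring
  have key : ε * γ * (γ + 1) * (v - 1) ^ (-(γ + 2)) /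
      (2 * (ε * γ * (v - 1) ^ (-(γ + 1))) ^ ((5:ℝ)/4))
      = C * (ε ^ (-(1:ℝ)/4) * (v-1) ^ ((γ-3)/4)) := by
    rw [hden, div_eq_iff (by positivity), hCdef]
    linear_combination (-(γ+1) * (ε ^ (-(1:ℝ)/4) * ε ^ ((5:ℝ)/4)) *
        ((v-1) ^ ((γ-3)/4) * (v-1) ^ (-(γ+1) * ((5:ℝ)/4)))) * eγ
      + (-(γ+1) * γ * ((v-1) ^ ((γ-3)/4) * (v-1) ^ (-(γ+1) * ((5:ℝ)/4)))) * eε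
      + (-(γ+1) * γ * ε) * eu
  rw [key]
  -- bounds on the u-power
  have hub : (c₂ * ε ^ α) ^ ((γ-3)/4) ≤ (v-1) ^ ((γ-3)/4) :=
    Real.rpow_le_rpow_of_nonpos hu (by linarith) hp
  have hlb : (v-1) ^ ((γ-3)/4) ≤ (c₁ * ε ^ α) ^ ((γ-3)/4) :=
    Real.rpow_le_rpow_of_nonpos (by positivity) h1 hp
  have hsplit : ∀ c : ℝ, 0 < c → ε ^ (-(1:ℝ)/4) * (c * ε ^ α) ^ ((γ-3)/4)
      = c ^ ((γ-3)/4) * ε ^ (-(1:ℝ)/4 + α * ((γ-3)/4)) := by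
    intro c hc
    rw [Real.mul_rpow hc.le hεα.le, ← Real.rpow_mul hε.le, Real.rpow_add hε]
    ring
  have hγm1 : (0:ℝ) < γ - 1 := by linarith
  have hγp1 : (0:ℝ) < γ + 1 := by linarith
  constructor
  · -- lower bound
    have e1 : C * c₂ ^ ((γ-3)/4) * ε ^ (-1 / (γ + 1))
        ≤ C * (c₂ ^ ((γ-3)/4) * ε ^ (-(1:ℝ)/4 + α * ((γ-3)/4))) := by
      have hexp : -1 / (γ + 1) ≥ -(1:ℝ)/4 + α * ((γ-3)/4) := by
        have hα1' : 1 ≤ α * (γ+1) := (div_le_iff₀ hγp1).mp hα1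
        have hnn : 0 ≤ ((α*(γ+1) - 1) * (3-γ)) / (4*(γ+1)) :=
          div_nonneg (mul_nonneg (by linarith) (by linarith)) (by linarith)
        have hid : -1/(γ+1) - (-(1:ℝ)/4 + α * ((γ-3)/4))
            = ((α*(γ+1) - 1) * (3-γ)) / (4*(γ+1)) := by
          field_simp
          ring
        linarith
      have h5 := Real.rpow_le_rpow_of_exponent_ge hε hε1.le hexp
      rw [mul_assoc]
      exact mul_le_mul_of_nonneg_left
        (mul_le_mul_of_nonneg_left h5 (Real.rpow_pos_of_pos hc₂ ((γ-3)/4)).le) hCpos.le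
    calc C * c₂ ^ ((γ-3)/4) * ε ^ (-1 / (γ + 1))
        ≤ C * (c₂ ^ ((γ-3)/4) * ε ^ (-(1:ℝ)/4 + α * ((γ-3)/4))) := e1
      _ = C * (ε ^ (-(1:ℝ)/4) * (c₂ * ε ^ α) ^ ((γ-3)/4)) := by rw [hsplit c₂ hc₂]
      _ ≤ C * (ε ^ (-(1:ℝ)/4) * (v-1) ^ ((γ-3)/4)) := by
          exact mul_le_mul_of_nonneg_left
            (mul_le_mul_of_nonneg_left hub (Real.rpow_pos_of_pos hε (-(1:ℝ)/4)).le) hCpos.le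
  · -- upper bound
    have hexp : -(1:ℝ)/4 + α * ((γ-3)/4) ≥ -1 / (2 * (γ - 1)) := by
      have hα2' : α * (γ-1) ≤ 1 := (le_div_iff₀ hγm1).mp hα2
      have hnn : 0 ≤ ((1 - α*(γ-1)) * (3-γ)) / (4*(γ-1)) :=
        div_nonneg (mul_nonneg (by linarith) (by linarith)) (by linarith)
      have hid : (-(1:ℝ)/4 + α * ((γ-3)/4)) - (-1 / (2*(γ-1)))
          = ((1 - α*(γ-1)) * (3-γ)) / (4*(γ-1)) := by
        field_simp
        ring
      linarith
    calc C * (ε ^ (-(1:ℝ)/4) * (v-1) ^ ((γ-3)/4))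
        ≤ C * (ε ^ (-(1:ℝ)/4) * (c₁ * ε ^ α) ^ ((γ-3)/4)) := by
          exact mul_le_mul_of_nonneg_left
            (mul_le_mul_of_nonneg_left hlb (Real.rpow_pos_of_pos hε (-(1:ℝ)/4)).le) hCpos.le
      _ = C * (c₁ ^ ((γ-3)/4) * ε ^ (-(1:ℝ)/4 + α * ((γ-3)/4))) := by rw [hsplit c₁ hc₁]
      _ ≤ C * c₁ ^ ((γ-3)/4) * ε ^ (-1 / (2 * (γ - 1))) := by
          have h5 := Real.rpow_le_rpow_of_exponent_ge hε hε1.le hexp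
          rw [mul_assoc]
          exact mul_le_mul_of_nonneg_left
            (mul_le_mul_of_nonneg_left h5 (Real.rpow_pos_of_pos hc₁ ((γ-3)/4)).le) hCpos.le
end

section
/- Let T > 0, and let v ∈ W^{1,∞}((0,T)×ℝ), u ∈ L^∞((0,T); W^{1,∞}(ℝ)) satisfy ∂_t v = ∂_x u a.e. with v(0,·) = v⁰. If ∂_x u = 0 a.e. on the set {v ≤ 1} and v⁰ ≥ 1 everywhere, then v(t,x) ≥ 1 for a.e. (t,x) ∈ [0,T] × ℝ. -/
open Real Set MeasureTheory

open Filter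
open scoped ENNReal NNReal

/-- A Lipschitz function whose derivative is a.e. nonpositive on `(a,b)` decays. -/
lemma lipschitz_decay {f : ℝ → ℝ} {C : NNReal} (hf : LipschitzWith C f) {a b : ℝ} (hab : a ≤ b)
    (hd : ∀ᵐ t ∂(volume.restrict (Set.Ioo a b)), deriv f t ≤ 0) : f b ≤ f a := by
  set g : ℝ → ℝ := fun t => C * t - f t with hgdef
  have hm : Monotone g := by
    intro s t hst
    have h := hf.dist_le_mul t s
    rw [Real.dist_eq, Real.dist_eq] at h
    have h2 : f t - f s ≤ C * |t - s| := le_trans (le_abs_self _) h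
    rw [abs_of_nonneg (by linarith)] at h2
    simp only [hgdef]
    nlinarith
  set μ := hm.stieltjesFunction.measure with hμ
  have hG : ∀ x, hm.stieltjesFunction x = g x := by
    intro x
    rw [hm.stieltjesFunction_eq]
    have hgc : Continuous g := (continuous_const.mul continuous_id).sub hf.continuous
    exact rightLim_eq_of_tendsto (
      (hgc.tendsto x).mono_left nhdsWithin_le_nhds)
  have key : ∀ᵐ t ∂(volume.restrict (Set.Ioo a b)), (C : ℝ≥0∞) ≤ μ.rnDeriv volume t := by
    filter_upwards [hd, ae_restrict_of_ae hm.ae_hasDerivAt,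
      ae_restrict_of_ae (Measure.rnDeriv_lt_top μ volume)] with t ht h1 h2
    have hf' : HasDerivAt f ((C : ℝ) * 1 - (μ.rnDeriv volume t).toReal) t := by
      have hc : HasDerivAt (fun s : ℝ => (C : ℝ) * s) ((C : ℝ) * 1) t :=
        (hasDerivAt_id t).const_mul _
      have := hc.sub h1
      rw [show f = (fun s => (C:ℝ) * s) - g by ext s; simp [hgdef]]
      exact this
    have hdf : deriv f t = (C : ℝ) * 1 - (μ.rnDeriv volume t).toReal := hf'.deriv
    have hCle : (C : ℝ) ≤ (μ.rnDeriv volume t).toReal := by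
      rw [hdf] at ht; linarith
    calc (C : ℝ≥0∞) = ENNReal.ofReal (C : ℝ) := ENNReal.ofReal_coe_nnreal.symm
      _ ≤ ENNReal.ofReal (μ.rnDeriv volume t).toReal := ENNReal.ofReal_le_ofReal hCle
      _ = μ.rnDeriv volume t := ENNReal.ofReal_toReal h2.ne
  have hI : (C : ℝ≥0∞) * volume (Set.Ioo a b) ≤ μ (Set.Ioc a b) := by
    calc (C : ℝ≥0∞) * volume (Set.Ioo a b)
        = ∫⁻ _ in Set.Ioo a b, (C : ℝ≥0∞) ∂volume := by
          rw [setLIntegral_const, mul_comm]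
      _ ≤ ∫⁻ t in Set.Ioo a b, μ.rnDeriv volume t ∂volume := lintegral_mono_ae key
      _ ≤ μ (Set.Ioo a b) := Measure.setLIntegral_rnDeriv_le _
      _ ≤ μ (Set.Ioc a b) := measure_mono Set.Ioo_subset_Ioc_self
  rw [hμ, StieltjesFunction.measure_Ioc, hG, hG, Real.volume_Ioo,
    ← ENNReal.ofReal_coe_nnreal, ← ENNReal.ofReal_mul (by positivity)] at hI
  have hgm : (0:ℝ) ≤ g b - g a := by linarith [hm hab]
  rw [ENNReal.ofReal_le_ofReal_iff hgm] at hI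
  simp only [hgdef] at hI
  nlinarith

theorem congestion_constraint_propagates (T : ℝ) (hT : 0 < T)
    (v u : ℝ → ℝ → ℝ) (v0 : ℝ → ℝ) (Cv Cu : NNReal)
    (hv_lip : LipschitzWith Cv (fun q : ℝ × ℝ => v q.1 q.2))
    (hu_lip : ∀ t ∈ Set.Icc (0:ℝ) T, LipschitzWith Cu (u t))
    (heq : ∀ᵐ q : ℝ × ℝ ∂(volume.restrict (Set.Ioo 0 T ×ˢ (Set.univ : Set ℝ))),
      deriv (fun t => v t q.2) q.1 = deriv (u q.1) q.2)
    (hinit : ∀ x, v 0 x = v0 x)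
    (hincomp : ∀ᵐ q : ℝ × ℝ ∂(volume.restrict (Set.Ioo 0 T ×ˢ (Set.univ : Set ℝ))),
      v q.1 q.2 ≤ 1 → deriv (u q.1) q.2 = 0)
    (hv0 : ∀ x, 1 ≤ v0 x) :
    ∀ᵐ q : ℝ × ℝ ∂(volume.restrict (Set.Ioo 0 T ×ˢ (Set.univ : Set ℝ))),
      1 ≤ v q.1 q.2 := by
  -- combine the two a.e. hypotheses
  have hkey : ∀ᵐ q : ℝ × ℝ ∂(volume.restrict (Set.Ioo 0 T ×ˢ (Set.univ : Set ℝ))),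
      (v q.1 q.2 ≤ 1 → deriv (fun t => v t q.2) q.1 = 0) := by
    filter_upwards [heq, hincomp] with q h1 h2 hle
    rw [h1]; exact h2 hle
  -- rewrite the restricted measure as a product measure
  have hmeas : volume.restrict (Set.Ioo 0 T ×ˢ (Set.univ : Set ℝ))
      = (volume.restrict (Set.Ioo 0 T)).prod (volume : Measure ℝ) := by
    rw [Measure.volume_eq_prod, ← Measure.restrict_prod_eq_prod_univ]
  rw [hmeas] at hkey ⊢
  -- swap coordinates to get a statement for a.e. x
  have hswap : ∀ᵐ p : ℝ × ℝ ∂((volume : Measure ℝ).prod (volume.restrict (Set.Ioo 0 T))),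
      (v p.2 p.1 ≤ 1 → deriv (fun t => v t p.1) p.2 = 0) :=
    Measure.measurePreserving_swap.quasiMeasurePreserving.ae hkey
  have hx : ∀ᵐ x : ℝ ∂(volume : Measure ℝ), ∀ᵐ t ∂(volume.restrict (Set.Ioo 0 T)),
      (v t x ≤ 1 → deriv (fun s => v s x) t = 0) := Measure.ae_ae_of_ae_prod hswap
  -- the pointwise-in-x statement
  have hmain : ∀ᵐ x : ℝ ∂(volume : Measure ℝ), ∀ t ∈ Set.Ioo 0 T, 1 ≤ v t x := by
    filter_upwards [hx] with x hxae
    set f : ℝ → ℝ := fun t => v t x with hfdef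
    have hfL : LipschitzWith Cv f := by
      have := hv_lip.comp (LipschitzWith.prodMk_right (x : ℝ))
      rw [mul_one] at this
      exact this
    set F : ℝ → ℝ := fun t => max (1 - f t) 0 with hFdef
    have hFL : LipschitzWith Cv F := by
      have hout : LipschitzWith 1 (fun y : ℝ => max (1 - y) 0) := by
        apply LipschitzWith.of_dist_le_mul
        intro a b
        rw [Real.dist_eq, Real.dist_eq]
        calc |max (1 - a) 0 - max (1 - b) 0| ≤ |(1 - a) - (1 - b)| :=
              abs_max_sub_max_le_abs _ _ _
          _ = |a - b| := by rw [abs_sub_comm]; ring_nf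
          _ ≤ 1 * |a - b| := by rw [one_mul]
      have := hout.comp hfL
      rw [one_mul] at this
      exact this
    have hderivF : ∀ᵐ t ∂(volume.restrict (Set.Ioo 0 T)), deriv F t ≤ 0 := by
      filter_upwards [hxae, ae_restrict_of_ae hFL.ae_differentiableAt_of_real]
        with t h0 hdF
      rcases lt_trichotomy (f t) 1 with hlt | heq1 | hgt
      · -- f t < 1 : near t, F = 1 - f, and deriv f t = 0
        have hev : ∀ᶠ s in nhds t, f s < 1 :=
          (hfL.continuous.continuousAt).eventually_lt continuousAt_const hlt
        have hFeq : F =ᶠ[nhds t] fun s => 1 - f s := by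
          filter_upwards [hev] with s hs
          simp only [hFdef]
          exact max_eq_left (by linarith)
        have : deriv F t = deriv (fun s => 1 - f s) t := hFeq.deriv_eq
        rw [this]
        have h1 : (fun s => 1 - f s) = fun s => -(f s - 1) := by funext s; ring
        rw [h1, deriv.fun_neg, deriv_sub_const, h0 hlt.le, neg_zero]
      · -- f t = 1 : t is a global min of F
        have hmin : IsLocalMin F t := by
          apply Filter.Eventually.of_forall
          intro s
          simp only [hFdef, heq1]
          simpa using le_max_right (1 - f s) 0
        rw [hmin.deriv_eq_zero]
      · -- f t > 1 : F vanishes near t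
        have hev : ∀ᶠ s in nhds t, 1 < f s :=
          (continuousAt_const).eventually_lt (hfL.continuous.continuousAt) hgt
        have hFeq : F =ᶠ[nhds t] fun _ => (0 : ℝ) := by
          filter_upwards [hev] with s hs
          simp only [hFdef]
          exact max_eq_right (by linarith)
        rw [hFeq.deriv_eq, deriv_const]
    intro t ht
    have hdec : F t ≤ F 0 :=
      lipschitz_decay hFL ht.1.le
        (ae_restrict_of_ae_restrict_of_subset (Set.Ioo_subset_Ioo_right ht.2.le) hderivF)
    have hF0 : F 0 = 0 := by
      simp only [hFdef, hfdef, hinit x]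
      exact max_eq_right (by linarith [hv0 x])
    have : 1 - f t ≤ 0 := le_trans (le_max_left _ _) (by rw [hF0] at hdec; exact hdec)
    linarith
  -- transfer back to the product measure
  have hset : MeasurableSet {p : ℝ × ℝ | v p.2 p.1 < 1} := by
    have : Continuous fun p : ℝ × ℝ => v p.2 p.1 :=
      hv_lip.continuous.comp continuous_swap
    exact measurableSet_lt this.measurable measurable_const
  have hnull : (volume : Measure ℝ).prod (volume.restrict (Set.Ioo 0 T))
      {p : ℝ × ℝ | v p.2 p.1 < 1} = 0 := by
    rw [Measure.measure_prod_null hset]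
    filter_upwards [hmain] with x hxall
    have : (Prod.mk x ⁻¹' {p : ℝ × ℝ | v p.2 p.1 < 1}) ∩ Set.Ioo 0 T = ∅ := by
      ext t
      simp only [Set.mem_inter_iff, Set.mem_preimage, Set.mem_setOf_eq, Set.mem_empty_iff_false,
        iff_false, not_and]
      intro h1 h2
      exact absurd (hxall t h2) (not_le.2 h1)
    simp only [Pi.zero_apply]
    rw [Measure.restrict_apply' measurableSet_Ioo, this, measure_empty]
  have hgoal : ∀ᵐ p : ℝ × ℝ ∂((volume : Measure ℝ).prod (volume.restrict (Set.Ioo 0 T))),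
      1 ≤ v p.2 p.1 := by
    rw [ae_iff]
    convert hnull using 2
    ext p
    simp [not_le]
  exact Measure.measurePreserving_swap.quasiMeasurePreserving.ae hgoal
end

section
/- Let T > 0, and let v ∈ W^{1,∞}((0,T)×ℝ), u ∈ L^∞((0,T); W^{1,∞}(ℝ)) satisfy ∂_t v = ∂_x u a.e. with v(0,·) = v⁰. If v(t,x) ≥ 1 for all (t,x) ∈ [0,T] × ℝ, then v⁰ ≥ 1 and ∂_x u = 0 a.e. on the set {(t,x) : v(t,x) = 1}. -/
open Real Set MeasureTheory

theorem congestion_implies_incompressible (T : ℝ) (hT : 0 < T)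
    (v u : ℝ → ℝ → ℝ) (v0 : ℝ → ℝ) (Cv Cu : NNReal)
    (hv_lip : LipschitzWith Cv (fun q : ℝ × ℝ => v q.1 q.2))
    (hu_lip : ∀ t ∈ Set.Icc (0:ℝ) T, LipschitzWith Cu (u t))
    (heq : ∀ᵐ q : ℝ × ℝ ∂(volume.restrict (Set.Ioo 0 T ×ˢ (Set.univ : Set ℝ))),
      deriv (fun t => v t q.2) q.1 = deriv (u q.1) q.2)
    (hinit : ∀ x, v 0 x = v0 x)
    (hv1 : ∀ t ∈ Set.Icc (0:ℝ) T, ∀ x, 1 ≤ v t x) :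
    (∀ x, 1 ≤ v0 x) ∧
    ∀ᵐ q : ℝ × ℝ ∂(volume.restrict (Set.Ioo 0 T ×ˢ (Set.univ : Set ℝ))),
      v q.1 q.2 = 1 → deriv (u q.1) q.2 = 0 := by
  constructor
  · intro x
    rw [← hinit x]
    exact hv1 0 ⟨le_refl 0, hT.le⟩ x
  · have hmeas : MeasurableSet (Set.Ioo (0:ℝ) T ×ˢ (Set.univ : Set ℝ)) :=
      measurableSet_Ioo.prod MeasurableSet.univ
    filter_upwards [heq, ae_restrict_mem hmeas] with q hq hqmem hv1eq
    rw [← hq]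
    have ht : q.1 ∈ Set.Ioo (0:ℝ) T := hqmem.1
    have hmin : IsLocalMin (fun t => v t q.2) q.1 := by
      filter_upwards [isOpen_Ioo.mem_nhds ht] with t htI
      calc v q.1 q.2 = 1 := hv1eq
        _ ≤ v t q.2 := hv1 t ⟨htI.1.le, htI.2.le⟩ q.2
    exact hmin.deriv_eq_zero
end

section
/- Let ρ > 0, m ∈ ℝ and p : (0,∞) → ℝ be C¹. Define η₄(ρ,m) = m³/ρ² + 6m ∫^ρ p(s)/s² ds and q₄(ρ,m) = m⁴/ρ³ + 3m²[ p(ρ)/ρ² + (2/ρ)∫^ρ p(s)/s² ds ] + 6[ p(ρ)∫^ρ p(s)/s² ds - ∫^ρ p(s)²/s² ds ]. Then (η₄, q₄) is an entropy–entropy flux pair for the 1D isentropic Euler system with flux f(ρ,m) = (m, m²/ρ + p(ρ)), i.e. ∇q₄ = ∇η₄ · Df. -/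
open Real Set

theorem fourth_entropy_pair (p p' P P₂ : ℝ → ℝ)
    (hp : ∀ s > (0:ℝ), HasDerivAt p (p' s) s)
    (hP : ∀ s > (0:ℝ), HasDerivAt P (p s / s ^ 2) s)
    (hP₂ : ∀ s > (0:ℝ), HasDerivAt P₂ ((p s) ^ 2 / s ^ 2) s)
    (η q : ℝ → ℝ → ℝ)
    (hη : ∀ ρ m, η ρ m = m ^ 3 / ρ ^ 2 + 6 * m * P ρ)
    (hq : ∀ ρ m, q ρ m = m ^ 4 / ρ ^ 3
      + 3 * m ^ 2 * (p ρ / ρ ^ 2 + 2 / ρ * P ρ)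
      + 6 * (p ρ * P ρ - P₂ ρ)) :
    ∀ ρ m : ℝ, 0 < ρ →
      (deriv (fun r => q r m) ρ =
        deriv (fun r => η r m) ρ * 0 +
          deriv (fun y => η ρ y) m * (-(m ^ 2) / ρ ^ 2 + p' ρ)) ∧
      (deriv (fun y => q ρ y) m =
        deriv (fun r => η r m) ρ * 1 +
          deriv (fun y => η ρ y) m * (2 * m / ρ)) := by
  intro ρ m hρ
  have hρ' : ρ ≠ 0 := ne_of_gt hρ
  have h2 : (ρ:ℝ)^2 ≠ 0 := pow_ne_zero _ hρ'
  have h3 : (ρ:ℝ)^3 ≠ 0 := pow_ne_zero _ hρ'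
  have hpρ := hp ρ hρ
  have hPρ := hP ρ hρ
  have hP₂ρ := hP₂ ρ hρ
  have hpow2 : HasDerivAt (fun r : ℝ => r^2) (2*ρ^1) ρ := hasDerivAt_pow 2 ρ
  have hpow3 : HasDerivAt (fun r : ℝ => r^3) (3*ρ^2) ρ := by
    simpa using hasDerivAt_pow 3 ρ
  -- derivative of η in ρ
  have hηr : HasDerivAt (fun r => η r m)
      ((0 * ρ^2 - m^3*(2*ρ^1))/(ρ^2)^2 + 6*m*(p ρ/ρ^2)) ρ := by
    have e : (fun r => η r m) = fun r => m^3/r^2 + 6*m*P r := by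
      funext r; rw [hη]
    rw [e]
    exact ((hasDerivAt_const ρ (m^3)).div hpow2 h2).add (hPρ.const_mul (6*m))
  -- derivative of η in m
  have hηm : HasDerivAt (fun y => η ρ y) (3*m^2/ρ^2 + 6*1*P ρ) m := by
    have e : (fun y => η ρ y) = fun y => y^3/ρ^2 + 6*y*P ρ := by
      funext y; rw [hη]
    rw [e]
    have h1 : HasDerivAt (fun y : ℝ => y^3/ρ^2) (3*m^2/ρ^2) m := by
      simpa using (hasDerivAt_pow 3 m).div_const (ρ^2)
    have hId : HasDerivAt (fun y : ℝ => 6*y) 6 m := by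
      simpa using (hasDerivAt_id m).const_mul (6:ℝ)
    have h2' : HasDerivAt (fun y : ℝ => 6*y*P ρ) (6*1*P ρ) m := by
      simpa using hId.mul_const (P ρ)
    exact h1.add h2'
  -- derivative of q in ρ
  have hqr : HasDerivAt (fun r => q r m)
      ((0 * ρ^3 - m^4*(3*ρ^2))/(ρ^3)^2
        + 3*m^2*((p' ρ * ρ^2 - p ρ *(2*ρ^1))/(ρ^2)^2
          + (((0*ρ - 2*1)/ρ^2) * P ρ + (2/ρ) * (p ρ/ρ^2)))
        + 6*(p' ρ * P ρ + p ρ * (p ρ/ρ^2) - (p ρ)^2/ρ^2)) ρ := by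
    have e : (fun r => q r m)
        = fun r => m^4/r^3 + 3*m^2*(p r/r^2 + 2/r*P r) + 6*(p r * P r - P₂ r) := by
      funext r; rw [hq]
    rw [e]
    have hA : HasDerivAt (fun r : ℝ => m^4/r^3)
        ((0 * ρ^3 - m^4*(3*ρ^2))/(ρ^3)^2) ρ :=
      (hasDerivAt_const ρ (m^4)).div hpow3 h3
    have hB : HasDerivAt (fun r : ℝ => p r/r^2)
        ((p' ρ * ρ^2 - p ρ *(2*ρ^1))/(ρ^2)^2) ρ := hpρ.div hpow2 h2
    have hC : HasDerivAt (fun r : ℝ => 2/r) ((0*ρ - 2*1)/ρ^2) ρ := by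
      simpa [Pi.div_def] using (hasDerivAt_const ρ (2:ℝ)).div (hasDerivAt_id ρ) hρ'
    have hD : HasDerivAt (fun r : ℝ => 2/r*P r)
        (((0*ρ - 2*1)/ρ^2) * P ρ + (2/ρ) * (p ρ/ρ^2)) ρ := hC.mul hPρ
    have hE : HasDerivAt (fun r : ℝ => p r * P r - P₂ r)
        (p' ρ * P ρ + p ρ * (p ρ/ρ^2) - (p ρ)^2/ρ^2) ρ := (hpρ.mul hPρ).sub hP₂ρ
    exact ((hA.add ((hB.add hD).const_mul (3*m^2))).add (hE.const_mul 6))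
  -- derivative of q in m
  have hqm : HasDerivAt (fun y => q ρ y)
      (4*m^3/ρ^3 + 3*(2*m)*(p ρ/ρ^2 + 2/ρ*P ρ)) m := by
    have e : (fun y => q ρ y)
        = fun y => y^4/ρ^3 + 3*y^2*(p ρ/ρ^2 + 2/ρ*P ρ) + 6*(p ρ * P ρ - P₂ ρ) := by
      funext y; rw [hq]
    rw [e]
    have h1 : HasDerivAt (fun y : ℝ => y^4/ρ^3) (4*m^3/ρ^3) m := by
      simpa using (hasDerivAt_pow 4 m).div_const (ρ^3)
    have h2' : HasDerivAt (fun y : ℝ => 3*y^2) (3*(2*m)) m := by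
      simpa using ((hasDerivAt_pow 2 m).const_mul (3:ℝ))
    have h3' : HasDerivAt (fun y : ℝ => 3*y^2*(p ρ/ρ^2 + 2/ρ*P ρ))
        (3*(2*m)*(p ρ/ρ^2 + 2/ρ*P ρ)) m := h2'.mul_const _
    have h4 : HasDerivAt (fun y : ℝ => 6*(p ρ * P ρ - P₂ ρ)) 0 m :=
      hasDerivAt_const m _
    simpa [Pi.add_def] using (h1.add h3').add h4
  rw [hηr.deriv, hηm.deriv, hqr.deriv, hqm.deriv]
  constructor <;> · field_simp; ring
end
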